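/- arXiv:1901.02474 — 2 statements merged into one kernel-verified Lean document; each statement's English description precedes it below -/
import Mathlib

section
/- Let f : ℝ → ℝ be a concave function such that f(0) = 0, f is differentiable at 0 with f'(0) ≠ 0, f is bounded above with sup f > 0, and there exists x* > 0 with f(x*) > 0. Let P and Q be probability measures on a measurable space X. Define D^Rp(P, Q) = ⨆_C 2·∫∫ f(C(x) − C(y)) d(P ⊗ Q)(x, y), where the supremum is taken over all bounded measurable functions C : X → ℝ. Then D^Rp(P, Q) ≥ 0, and D^Rp(P, Q) = 0 if and only if P = Q. -/
/-!
Concavity and `f 0 = 0` give `f u + f (-u) ≤ 0`, so when `P = Q` the symmetry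
`(x, y) ↦ (y, x)` of `P ⊗ P` makes every objective nonpositive, while the zero critic
attains `0`. If `P ≠ Q`, pick a measurable `s` with `P s ≠ Q s`; the critic `c • 1_s` has
objective `2 (P(s) (1 - Q(s)) f(c) + (1 - P(s)) Q(s) f(-c))`, which vanishes at `c = 0` with
derivative `2 (P(s) - Q(s)) f'(0) ≠ 0` there, so it is positive for some `c`.
-/

open MeasureTheory Set

lemma concaveOn_univ_of_forall_le {f : ℝ → ℝ}
    (hf : ∀ x y α : ℝ, 0 ≤ α → α ≤ 1 →
      α * f x + (1 - α) * f y ≤ f (α * x + (1 - α) * y)) :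
    ConcaveOn ℝ univ f := by
  refine ⟨convex_univ, fun x _ y _ a b ha hb hab => ?_⟩
  obtain rfl : b = 1 - a := by linarith
  exact hf x y a ha (by linarith)

lemma ConcaveOn.add_map_neg_le {f : ℝ → ℝ} (hf : ConcaveOn ℝ univ f) (u : ℝ) :
    f u + f (-u) ≤ 2 * f 0 := by
  have h := hf.2 (mem_univ u) (mem_univ (-u)) (by norm_num : (0 : ℝ) ≤ 1 / 2)
    (by norm_num : (0 : ℝ) ≤ 1 / 2) (by norm_num)
  simp only [smul_eq_mul] at h
  rw [show 1 / 2 * u + 1 / 2 * -u = (0 : ℝ) by ring] at h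
  linarith

lemma exists_lt_of_hasDerivAt_ne_zero {g : ℝ → ℝ} {d a : ℝ} (hg : HasDerivAt g d a)
    (hd : d ≠ 0) : ∃ c, g a < g c := by
  by_contra! h
  exact hd (IsLocalMax.hasDerivAt_eq_zero (Filter.Eventually.of_forall h) hg)

section Critic

variable {X : Type*} [MeasurableSpace X]

lemma integrable_comp_sub_of_abs_le {f : ℝ → ℝ} (hf : Continuous f) {C : X → ℝ}
    (hC : Measurable C) {M : ℝ} (hM : ∀ x, |C x| ≤ M) (ν : Measure (X × X))
    [IsFiniteMeasure ν] :
    Integrable (fun z : X × X => f (C z.1 - C z.2)) ν := by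
  obtain ⟨K, hK⟩ := (isCompact_Icc (a := -(2 * M)) (b := 2 * M)).exists_bound_of_continuousOn
    hf.continuousOn
  have hmeas := hf.measurable.comp ((hC.comp measurable_fst).sub (hC.comp measurable_snd))
  refine .of_bound hmeas.aestronglyMeasurable K
    (Filter.Eventually.of_forall fun z => hK _ (abs_le.mp ?_))
  calc |C z.1 - C z.2| ≤ |C z.1| + |C z.2| := abs_sub _ _
    _ ≤ 2 * M := by linarith [hM z.1, hM z.2]

lemma integral_comp_sub_indicator_const (P Q : Measure X) [IsProbabilityMeasure P]
    [IsProbabilityMeasure Q] {f : ℝ → ℝ} (hf0 : f 0 = 0) {s : Set X} (hs : MeasurableSet s)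
    (c : ℝ) :
    ∫ z : X × X, f (s.indicator (fun _ => c) z.1 - s.indicator (fun _ => c) z.2) ∂(P.prod Q) =
      P.real s * (1 - Q.real s) * f c + (1 - P.real s) * Q.real s * f (-c) := by
  have hpoint :
      (fun z : X × X => f (s.indicator (fun _ => c) z.1 - s.indicator (fun _ => c) z.2)) =
        fun z => (s ×ˢ sᶜ).indicator (fun _ => f c) z +
          (sᶜ ×ˢ s).indicator (fun _ => f (-c)) z := by
    ext ⟨x, y⟩
    by_cases hx : x ∈ s <;> by_cases hy : y ∈ s <;> simp [hx, hy, hf0]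
  rw [hpoint, integral_add ((integrable_const _).indicator (hs.prod hs.compl))
      ((integrable_const _).indicator (hs.compl.prod hs)),
    integral_indicator_const _ (hs.prod hs.compl), integral_indicator_const _ (hs.compl.prod hs),
    measureReal_prod_prod, measureReal_prod_prod, probReal_compl_eq_one_sub hs,
    probReal_compl_eq_one_sub hs, smul_eq_mul, smul_eq_mul]

lemma integral_comp_sub_prod_self_nonpos (P : Measure X) [SFinite P] {f : ℝ → ℝ}
    (hf : ∀ u, f u + f (-u) ≤ 0) {C : X → ℝ}
    (hint : Integrable (fun z : X × X => f (C z.1 - C z.2)) (P.prod P)) :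
    ∫ z : X × X, f (C z.1 - C z.2) ∂(P.prod P) ≤ 0 := by
  have hswap : ∫ z : X × X, f (C z.2 - C z.1) ∂(P.prod P) =
      ∫ z : X × X, f (C z.1 - C z.2) ∂(P.prod P) :=
    integral_prod_swap (fun z : X × X => f (C z.1 - C z.2))
  have hsum : ∫ z : X × X, (f (C z.1 - C z.2) + f (C z.2 - C z.1)) ∂(P.prod P) ≤ 0 :=
    integral_nonpos fun z => by simpa only [neg_sub, Pi.zero_apply] using hf (C z.1 - C z.2)
  have hint_swap : Integrable (fun z : X × X => f (C z.2 - C z.1)) (P.prod P) := hint.swap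
  rw [integral_add hint hint_swap, hswap] at hsum
  linarith

lemma exists_measurableSet_measureReal_ne {P Q : Measure X} [IsFiniteMeasure P]
    [IsFiniteMeasure Q] (hPQ : P ≠ Q) : ∃ s, MeasurableSet s ∧ P.real s ≠ Q.real s := by
  by_contra! h
  exact hPQ (Measure.ext fun s hs => (measureReal_eq_measureReal_iff).1 (h s hs))

lemma exists_integral_comp_sub_indicator_pos (P Q : Measure X) [IsProbabilityMeasure P]
    [IsProbabilityMeasure Q] {f : ℝ → ℝ} {d : ℝ} (hf0 : f 0 = 0) (hf : HasDerivAt f d 0)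
    (hd : d ≠ 0) {s : Set X} (hs : MeasurableSet s) (hPQ : P.real s ≠ Q.real s) :
    ∃ c, 0 < ∫ z : X × X, f (s.indicator (fun _ => c) z.1 - s.indicator (fun _ => c) z.2)
      ∂(P.prod Q) := by
  set p := P.real s
  set q := Q.real s
  have hneg : HasDerivAt (fun c => f (-c)) (-d) 0 := by
    have h := (show HasDerivAt f d (-0) by rwa [neg_zero]).comp 0 (hasDerivAt_neg 0)
    simpa [Function.comp_def] using h
  have hg : HasDerivAt (fun c => p * (1 - q) * f c + (1 - p) * q * f (-c)) ((p - q) * d) 0 :=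
    ((hf.const_mul _).add (hneg.const_mul _)).congr_deriv (by ring)
  obtain ⟨c, hc⟩ := exists_lt_of_hasDerivAt_ne_zero hg (mul_ne_zero (sub_ne_zero.2 hPQ) hd)
  refine ⟨c, ?_⟩
  rw [integral_comp_sub_indicator_const P Q hf0 hs]
  simpa [hf0] using hc

abbrev BoundedMeasurableFun (X : Type*) [MeasurableSpace X] :=
  {C : X → ℝ // Measurable C ∧ ∃ M : ℝ, ∀ x, |C x| ≤ M}

namespace BoundedMeasurableFun

instance : Zero (BoundedMeasurableFun X) := ⟨⟨0, measurable_const, 0, by simp⟩⟩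

@[simp]
lemma coe_zero : ((0 : BoundedMeasurableFun X) : X → ℝ) = 0 := rfl

noncomputable def indicatorConst {s : Set X} (hs : MeasurableSet s) (c : ℝ) :
    BoundedMeasurableFun X :=
  ⟨s.indicator fun _ => c, measurable_const.indicator hs, |c|,
    fun x => by simpa only [Real.norm_eq_abs] using norm_indicator_le_norm_self (fun _ => c) x⟩

end BoundedMeasurableFun

noncomputable def pairedObjective (f : ℝ → ℝ) (P Q : Measure X) (C : BoundedMeasurableFun X) :
    ℝ :=
  2 * ∫ z : X × X, f (C.1 z.1 - C.1 z.2) ∂(P.prod Q)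

lemma pairedObjective_zero {f : ℝ → ℝ} (P Q : Measure X) (hf0 : f 0 = 0) :
    pairedObjective f P Q 0 = 0 := by
  simp [pairedObjective, hf0]

variable {f : ℝ → ℝ} (P Q : Measure X) [IsProbabilityMeasure P] [IsProbabilityMeasure Q]

lemma bddAbove_range_pairedObjective (hf : Continuous f) (hbdd : BddAbove (range f)) :
    BddAbove (range (pairedObjective f P Q)) := by
  refine ⟨2 * ⨆ u, f u, forall_mem_range.2 fun C => ?_⟩
  have h := integral_mono (integrable_comp_sub_of_abs_le hf C.2.1 C.2.2.choose_spec (P.prod Q))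
    (integrable_const (⨆ u, f u)) fun z => le_ciSup hbdd (C.1 z.1 - C.1 z.2)
  simp only [integral_const, probReal_univ, one_smul] at h
  rw [pairedObjective]
  linarith

lemma pairedObjective_self_nonpos (hf : Continuous f) (hneg : ∀ u, f u + f (-u) ≤ 0)
    (C : BoundedMeasurableFun X) : pairedObjective f P P C ≤ 0 :=
  mul_nonpos_of_nonneg_of_nonpos zero_le_two <| integral_comp_sub_prod_self_nonpos P hneg <|
    integrable_comp_sub_of_abs_le hf C.2.1 C.2.2.choose_spec _

lemma exists_pairedObjective_pos {d : ℝ} (hf0 : f 0 = 0) (hf : HasDerivAt f d 0) (hd : d ≠ 0)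
    (hPQ : P ≠ Q) : ∃ C, 0 < pairedObjective f P Q C := by
  obtain ⟨s, hs, hne⟩ := exists_measurableSet_measureReal_ne hPQ
  obtain ⟨c, hc⟩ := exists_integral_comp_sub_indicator_pos P Q hf0 hf hd hs hne
  exact ⟨.indicatorConst hs c, mul_pos zero_lt_two hc⟩

end Critic

theorem DRp_is_divergence_general
    {X : Type*} [MeasurableSpace X]
    (f : ℝ → ℝ)
    (hf : ∀ x y α : ℝ, 0 ≤ α → α ≤ 1 →
      α * f x + (1 - α) * f y ≤ f (α * x + (1 - α) * y))
    (hf0 : f 0 = 0)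
    (hdiff : DifferentiableAt ℝ f 0)
    (hderiv : deriv f 0 ≠ 0)
    (hbdd : BddAbove (Set.range f))
    (P Q : Measure X) [IsProbabilityMeasure P] [IsProbabilityMeasure Q]
    (DRp : ℝ)
    (hDRp : DRp = ⨆ C : {C : X → ℝ // Measurable C ∧ ∃ M : ℝ, ∀ x, |C x| ≤ M},
      2 * ∫ p : X × X, f (C.1 p.1 - C.1 p.2) ∂(P.prod Q)) :
    0 ≤ DRp ∧ (DRp = 0 ↔ P = Q) := by
  have hconc := concaveOn_univ_of_forall_le hf
  have hcont : Continuous f := continuousOn_univ.mp (hconc.continuousOn isOpen_univ)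
  replace hDRp : DRp = ⨆ C, pairedObjective f P Q C := hDRp
  have hbddF := bddAbove_range_pairedObjective P Q hcont hbdd
  have hnonneg : 0 ≤ DRp := hDRp ▸ (pairedObjective_zero P Q hf0).ge.trans (le_ciSup hbddF 0)
  refine ⟨hnonneg, fun hzero => ?_, ?_⟩
  · by_contra hPQ
    obtain ⟨C, hC⟩ := exists_pairedObjective_pos P Q hf0 hdiff.hasDerivAt hderiv hPQ
    linarith [hDRp ▸ le_ciSup hbddF C]
  · rintro rfl
    have hneg (u : ℝ) : f u + f (-u) ≤ 0 := by linarith [hconc.add_map_neg_le u]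
    exact hnonneg.antisymm' (hDRp ▸ ciSup_le (pairedObjective_self_nonpos P hcont hneg))

/-- The relativistic paired objective `D^Rp` (supremum over bounded measurable critics) is
nonnegative, and vanishes iff `P = Q`. -/
theorem DRp_is_divergence
    {X : Type*} [MeasurableSpace X]
    (f : ℝ → ℝ)
    (hf : ∀ x y α : ℝ, 0 ≤ α → α ≤ 1 →
      α * f x + (1 - α) * f y ≤ f (α * x + (1 - α) * y))
    (hf0 : f 0 = 0)
    (hdiff : DifferentiableAt ℝ f 0)
    (hderiv : deriv f 0 ≠ 0)
    (hbdd : BddAbove (Set.range f))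
    (hsup : 0 < ⨆ x, f x)
    (hpos : ∃ xs : ℝ, 0 < xs ∧ 0 < f xs)
    (P Q : Measure X) [IsProbabilityMeasure P] [IsProbabilityMeasure Q]
    (DRp : ℝ)
    (hDRp : DRp = ⨆ C : {C : X → ℝ // Measurable C ∧ ∃ M : ℝ, ∀ x, |C x| ≤ M},
      2 * ∫ p : X × X, f (C.1 p.1 - C.1 p.2) ∂(P.prod Q)) :
    0 ≤ DRp ∧ (DRp = 0 ↔ P = Q) :=
  DRp_is_divergence_general f hf hf0 hdiff hderiv hbdd P Q DRp hDRp
end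

section
/- Let f_LS : ℝ → ℝ be defined by f_LS(z) = −(z − 1)² + 1. Let k ≥ 1, let x₁, …, x_k be i.i.d. real-valued random variables with distribution P, and let y₁, …, y_k be i.i.d. real-valued random variables with distribution Q, with all 2k variables mutually independent. Let C : ℝ → ℝ be measurable with C square-integrable under both P and Q, and write μ_x = E[C(x₁)] and σ_x² = Var[C(x₁)]. Then E[ (1/k)·Σ_{j=1}^k f_LS( (1/k)·Σ_{i=1}^k C(x_i) − C(y_j) ) ] = E_{y ∼ Q}[ f_LS( μ_x − C(y) ) ] − σ_x²/k. -/
/-!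
Since `fLS z = 2 z - z²`, every square-integrable `Z` satisfies `E[fLS Z] = fLS (E Z) - Var Z`.
Apply this to `Z = S - C(y_j)`, with `S` the mini-batch mean of the `C(x_i)`, and to
`Z = μ_x - C(y_j)`. As `S` and `y_j` are independent, `Var (S - C(y_j)) = Var S + Var C(y_j)`, and
`E S = μ_x`, so the two expectations differ by `Var S`, which is `σ_x² / k` for a mean of `k`
independent copies.
-/

open MeasureTheory ProbabilityTheory

/-- The least-squares GAN loss. -/
noncomputable def fLS (z : ℝ) : ℝ := -(z - 1)^2 + 1

lemma fLS_eq (z : ℝ) : fLS z = 2 * z - z ^ 2 := by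
  unfold fLS; ring

lemma continuous_fLS : Continuous fLS := by
  unfold fLS; fun_prop

lemma MeasureTheory.MeasurePreserving.integral_fun_comp {α β E : Type*} [MeasurableSpace α]
    [MeasurableSpace β] [NormedAddCommGroup E] [NormedSpace ℝ E] {μ : Measure α} {ν : Measure β}
    {f : α → β} (hf : MeasurePreserving f μ ν) {g : β → E} (hg : AEStronglyMeasurable g ν) :
    ∫ a, g (f a) ∂μ = ∫ b, g b ∂ν := by
  rw [← hf.map_eq, integral_map hf.aemeasurable (hf.map_eq ▸ hg)]

namespace ProbabilityTheory

variable {Ω : Type*} [MeasurableSpace Ω] {μ : Measure Ω}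

lemma integrable_fLS_comp [IsFiniteMeasure μ] {Z : Ω → ℝ} (hZ : MemLp Z 2 μ) :
    Integrable (fun ω => fLS (Z ω)) μ := by
  simp_rw [fLS_eq]
  exact ((hZ.integrable one_le_two).const_mul 2).sub hZ.integrable_sq

lemma integral_fLS_comp [IsProbabilityMeasure μ] {Z : Ω → ℝ} (hZ : MemLp Z 2 μ) :
    ∫ ω, fLS (Z ω) ∂μ = fLS μ[Z] - Var[Z; μ] := by
  simp_rw [fLS_eq]
  rw [integral_sub ((hZ.integrable one_le_two).const_mul 2) hZ.integrable_sq,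
    integral_const_mul, variance_eq_sub hZ]
  simp only [Pi.pow_apply]
  ring

lemma IndepFun.integral_fLS_sub [IsProbabilityMeasure μ] {S Y : Ω → ℝ} (hSY : IndepFun S Y μ)
    (hS : MemLp S 2 μ) (hY : MemLp Y 2 μ) :
    ∫ ω, fLS (S ω - Y ω) ∂μ = ∫ ω, fLS (μ[S] - Y ω) ∂μ - Var[S; μ] := by
  rw [integral_fLS_comp (Z := fun ω => S ω - Y ω) (hS.sub hY),
    integral_fLS_comp (Z := fun ω => μ[S] - Y ω) ((memLp_const _).sub hY),
    variance_fun_sub hS hY, hSY.covariance_eq_zero hS hY,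
    variance_const_sub hY.aestronglyMeasurable,
    integral_sub (hS.integrable one_le_two) (hY.integrable one_le_two),
    integral_sub (integrable_const _) (hY.integrable one_le_two), integral_const]
  simp only [probReal_univ, one_smul]
  ring

lemma integral_one_div_card_mul_sum {ι : Type*} [Fintype ι] [Nonempty ι] {X : ι → Ω → ℝ} {m : ℝ}
    (hX : ∀ i, Integrable (X i) μ) (hm : ∀ i, μ[X i] = m) :
    ∫ ω, (1 / Fintype.card ι : ℝ) * ∑ i, X i ω ∂μ = m := by
  rw [integral_const_mul, integral_finsetSum _ fun i _ => hX i]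
  simp only [hm, Finset.sum_const, Finset.card_univ, nsmul_eq_mul]
  field_simp

lemma variance_one_div_card_mul_sum {ι : Type*} [Fintype ι] {X : ι → Ω → ℝ} {v : ℝ}
    (hX : ∀ i, MemLp (X i) 2 μ) (hindep : Pairwise fun i j => IndepFun (X i) (X j) μ)
    (hv : ∀ i, Var[X i; μ] = v) :
    Var[fun ω => (1 / Fintype.card ι : ℝ) * ∑ i, X i ω; μ] = v / Fintype.card ι := by
  have hsum : Var[fun ω => ∑ i, X i ω; μ] = Fintype.card ι * v := by
    rw [← Finset.sum_fn, IndepFun.variance_sum (fun i _ => hX i) fun i _ j _ hij => hindep hij]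
    simp [hv]
  rw [variance_const_mul, hsum]
  rcases eq_or_ne (Fintype.card ι : ℝ) 0 with h | h
  · simp [h]
  · field_simp

lemma iIndepFun.indepFun_sumElim {β ι κ : Type*} [MeasurableSpace β] [Fintype ι] [Fintype κ]
    {x : ι → Ω → β} {y : κ → Ω → β} (h : iIndepFun (Sum.elim x y) μ)
    (hx : ∀ i, Measurable (x i)) (hy : ∀ j, Measurable (y j)) :
    IndepFun (fun ω i => x i ω) (fun ω j => y j ω) μ := by
  have := h.indepFun_finset (Finset.univ.map .inl) (Finset.univ.map .inr)
    (by simp [Finset.disjoint_left]) (Sum.forall.2 ⟨hx, hy⟩)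
  exact this.comp (φ := fun v i => v ⟨.inl i, by simp⟩) (ψ := fun v j => v ⟨.inr j, by simp⟩)
    (measurable_pi_lambda _ fun _ => measurable_pi_apply _)
    (measurable_pi_lambda _ fun _ => measurable_pi_apply _)

end ProbabilityTheory

/-- The mini-batch RaLSGAN estimator of the second term has expectation equal to the
population term minus `σ_x² / k` (finite-sample bias `-σ_x²/k`). -/
theorem raLSGAN_second_term_bias
    {Ω : Type*} [MeasurableSpace Ω] (μ : Measure Ω) [IsProbabilityMeasure μ]
    (P Q : Measure ℝ) [IsProbabilityMeasure P] [IsProbabilityMeasure Q]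
    (k : ℕ) (hk : 1 ≤ k)
    (x y : Fin k → Ω → ℝ)
    (hxm : ∀ i, Measurable (x i)) (hym : ∀ j, Measurable (y j))
    (hx_law : ∀ i, μ.map (x i) = P) (hy_law : ∀ j, μ.map (y j) = Q)
    (hindep : iIndepFun (Sum.elim x y) μ)
    (C : ℝ → ℝ) (hCm : Measurable C)
    (hC2P : MemLp C 2 P) (hC2Q : MemLp C 2 Q)
    (μx σx2 : ℝ)
    (hμx : μx = ∫ z, C z ∂P)
    (hσx2 : σx2 = ∫ z, (C z - μx)^2 ∂P) :
    ∫ ω, (1 / (k : ℝ)) * ∑ j : Fin k,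
        fLS ((1 / (k : ℝ)) * (∑ i : Fin k, C (x i ω)) - C (y j ω)) ∂μ
      = (∫ z, fLS (μx - C z) ∂Q) - σx2 / k := by
  have : Nonempty (Fin k) := ⟨⟨0, hk⟩⟩
  have hx : ∀ i, MeasurePreserving (x i) μ P := fun i => ⟨hxm i, hx_law i⟩
  have hy : ∀ j, MeasurePreserving (y j) μ Q := fun j => ⟨hym j, hy_law j⟩
  have hX : ∀ i, MemLp (fun ω => C (x i ω)) 2 μ := fun i => hC2P.comp_measurePreserving (hx i)
  have hY : ∀ j, MemLp (fun ω => C (y j ω)) 2 μ := fun j => hC2Q.comp_measurePreserving (hy j)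
  set S : Ω → ℝ := fun ω => (1 / (k : ℝ)) * ∑ i, C (x i ω)
  have hS : MemLp S 2 μ := (memLp_finsetSum _ fun i _ => hX i).const_mul _
  have hES : μ[S] = μx := by
    have := integral_one_div_card_mul_sum (μ := μ) (fun i => (hX i).integrable one_le_two)
      fun i => ((hx i).integral_fun_comp hCm.aestronglyMeasurable).trans hμx.symm
    rwa [Fintype.card_fin] at this
  have hVS : Var[S; μ] = σx2 / k := by
    have hVX : ∀ i, Var[fun ω => C (x i ω); μ] = σx2 := fun i => by
      rw [(hx i).variance_fun_comp hCm.aemeasurable, variance_eq_integral hCm.aemeasurable,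
        hσx2, hμx]
    have := variance_one_div_card_mul_sum hX
      (fun i j hij => (hindep.indepFun (Sum.inl_injective.ne hij)).comp hCm hCm) hVX
    rwa [Fintype.card_fin] at this
  have hSY : ∀ j, IndepFun S (fun ω => C (y j ω)) μ := fun j =>
    (hindep.indepFun_sumElim hxm hym).comp
      (φ := fun v : Fin k → ℝ => (1 / (k : ℝ)) * ∑ i, C (v i))
      (ψ := fun v : Fin k → ℝ => C (v j)) (by fun_prop) (by fun_prop)
  have hpop : ∀ j, ∫ ω, fLS (μx - C (y j ω)) ∂μ = ∫ z, fLS (μx - C z) ∂Q := fun j =>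
    (hy j).integral_fun_comp
      (continuous_fLS.measurable.comp (measurable_const.sub hCm)).aestronglyMeasurable
  have := integral_one_div_card_mul_sum (μ := μ)
    (fun j => integrable_fLS_comp (Z := fun ω => S ω - C (y j ω)) (hS.sub (hY j)))
    fun j => by rw [(hSY j).integral_fLS_sub hS (hY j), hES, hpop, hVS]
  rwa [Fintype.card_fin] at this
end
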